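/- For every t ∈ ℝ: cos γ2(t) = √(1 − (5/3)·cos² g1h(t)) and sin γ2(t) = −√(5/3)·cos g1h(t), where γ2(t) = arctan(χ⁻¹·tanh(A2·t)). -/

import Mathlib

/-- The `g1`-component of the separatrix, parameterized by `χ` directly. -/
noncomputable def g1h (χ A2 t : ℝ) : ℝ :=
  Real.arccos (-(Real.sqrt (3 / 5)) * Real.sinh (A2 * t) /
    Real.sqrt (χ ^ 2 + (1 + χ ^ 2) * Real.sinh (A2 * t) ^ 2))

/-- The transient part `γ2(t) = arctan(χ⁻¹·tanh(A2·t))`. -/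
noncomputable def gamma2 (χ A2 t : ℝ) : ℝ := Real.arctan (χ⁻¹ * Real.tanh (A2 * t))

theorem gamma2_cos_sin (χ A2 : ℝ) (hχ : 0 < χ) (hA2 : 0 < A2) :
    ∀ t : ℝ,
      Real.cos (gamma2 χ A2 t) = Real.sqrt (1 - (5 / 3) * Real.cos (g1h χ A2 t) ^ 2) ∧
      Real.sin (gamma2 χ A2 t) = -Real.sqrt (5 / 3) * Real.cos (g1h χ A2 t) := by
  intro t
  set s := Real.sinh (A2 * t) with hs
  set c := Real.cosh (A2 * t) with hc
  have hc1 : c ^ 2 = s ^ 2 + 1 := Real.cosh_sq (A2 * t)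
  have hcpos : 0 < c := Real.cosh_pos _
  set D := χ ^ 2 + (1 + χ ^ 2) * s ^ 2 with hDdef
  have hDpos : 0 < D := by positivity
  have hsD : Real.sqrt D > 0 := Real.sqrt_pos.mpr hDpos
  have hD2 : D = χ ^ 2 * c ^ 2 + s ^ 2 := by rw [hc1]; ring
  have htanh : Real.tanh (A2 * t) = s / c := Real.tanh_eq_sinh_div_cosh _
  -- the argument of arccos is in [-1,1]
  have h35 : Real.sqrt (3/5) ^ 2 = 3/5 := Real.sq_sqrt (by norm_num)
  have harg : |(-(Real.sqrt (3 / 5)) * s / Real.sqrt D)| ≤ 1 := by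
    rw [abs_div, abs_of_pos hsD, div_le_one hsD]
    rw [← Real.sqrt_sq_eq_abs]
    apply Real.sqrt_le_sqrt
    nlinarith [Real.sq_sqrt (show (3:ℝ)/5 ≥ 0 by norm_num), sq_nonneg s, sq_nonneg χ,
      mul_pos (mul_pos hχ hχ) (Real.cosh_pos (A2*t))]
  have hcosg : Real.cos (g1h χ A2 t) = -(Real.sqrt (3 / 5)) * s / Real.sqrt D := by
    rw [g1h, Real.cos_arccos (abs_le.mp harg).1 (abs_le.mp harg).2]
  have hcos2 : Real.cos (g1h χ A2 t) ^ 2 = (3/5) * s ^ 2 / D := by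
    rw [hcosg, div_pow, Real.sq_sqrt hDpos.le]
    rw [mul_pow, neg_pow, h35]; ring
  have hne : χ ^ 2 * c ^ 2 + s ^ 2 ≠ 0 := by positivity
  have hone : 1 - (5/3) * Real.cos (g1h χ A2 t) ^ 2 = χ ^ 2 * c ^ 2 / D := by
    rw [hcos2, hD2]
    field_simp
    ring
  set x := χ⁻¹ * (s / c) with hxdef
  have hgam : gamma2 χ A2 t = Real.arctan x := by rw [gamma2, htanh]
  have hx2 : 1 + x ^ 2 = D / (χ ^ 2 * c ^ 2) := by
    rw [hxdef, hD2]
    field_simp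
  have hsq : Real.sqrt (1 + x ^ 2) = Real.sqrt D / (χ * c) := by
    rw [hx2, Real.sqrt_div hDpos.le]
    congr 1
    rw [show χ ^ 2 * c ^ 2 = (χ * c) ^ 2 by ring, Real.sqrt_sq (by positivity)]
  have hχc : (0:ℝ) < χ * c := by positivity
  constructor
  · rw [hgam, Real.cos_arctan, hone]
    rw [show χ ^ 2 * c ^ 2 / D = (χ * c / Real.sqrt D) ^ 2 by
      rw [div_pow, Real.sq_sqrt hDpos.le]; ring]
    rw [Real.sqrt_sq (by positivity)]
    rw [hsq, one_div_div]
  · rw [hgam, Real.sin_arctan, hsq, hcosg]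
    have h53 : Real.sqrt (5/3) * Real.sqrt (3/5) = 1 := by
      rw [← Real.sqrt_mul (by norm_num)]
      norm_num
    have hlhs : x / (Real.sqrt D / (χ * c)) = s / Real.sqrt D := by
      rw [hxdef]
      field_simp
    have hrhs : -Real.sqrt (5/3) * (-(Real.sqrt (3/5)) * s / Real.sqrt D)
        = s / Real.sqrt D := by
      have h : -Real.sqrt (5/3) * (-(Real.sqrt (3/5)) * s / Real.sqrt D)
          = (Real.sqrt (5/3) * Real.sqrt (3/5)) * (s / Real.sqrt D) := by ring
      rw [h, h53, one_mul]
    rw [hlhs, hrhs]
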